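/- Let M_1^{(1)} = |+⟩⟨+|, M_2^{(1)} = |−⟩⟨−|, M_1^{(2)} = |+'⟩⟨+'|, M_2^{(2)} = |−'⟩⟨−'|, M_1^{(3)} = |0⟩⟨0|, M_2^{(3)} = |1⟩⟨1| be the six rank-one projections onto the eigenstates of the Pauli matrices σ_x, σ_y, σ_z. Then there exist four matrices L_1, L_2, L_3, L_4 with Σ_k L_k† L_k = I such that each M_i^{(J)} is a sum of exactly two of the L_k, and the index pairs {1,3},{2,4},{1,4},{2,3},{1,2},{3,4} used for the six projections are pairwise distinct with the pair for M_1^{(J)} disjoint from that of M_2^{(J)} for each J. -/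
import Mathlib


open Complex Matrix BigOperators

/-- rank-one projection |ψ⟩⟨ψ| as a matrix -/
noncomputable def proj (v : Fin 2 → ℂ) : Matrix (Fin 2) (Fin 2) ℂ :=
  Matrix.vecMulVec v (star v)

noncomputable def ket0 : Fin 2 → ℂ := ![1, 0]
noncomputable def ket1 : Fin 2 → ℂ := ![0, 1]
noncomputable def ketPlus : Fin 2 → ℂ := (Real.sqrt 2 : ℂ)⁻¹ • ![1, 1]
noncomputable def ketMinus : Fin 2 → ℂ := (Real.sqrt 2 : ℂ)⁻¹ • ![1, -1]
noncomputable def ketPlusI : Fin 2 → ℂ := (Real.sqrt 2 : ℂ)⁻¹ • ![1, I]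
noncomputable def ketMinusI : Fin 2 → ℂ := (Real.sqrt 2 : ℂ)⁻¹ • ![1, -I]

/-- The king's measurement projections: M J i, J ∈ {1,2,3}, i ∈ {1,2} (zero-based). -/
noncomputable def M : Fin 3 → Fin 2 → Matrix (Fin 2) (Fin 2) ℂ
  | 0, 0 => proj ketPlus
  | 0, 1 => proj ketMinus
  | 1, 0 => proj ketPlusI
  | 1, 1 => proj ketMinusI
  | 2, 0 => proj ket0
  | 2, 1 => proj ket1

noncomputable def Lmat : Fin 4 → Matrix (Fin 2) (Fin 2) ℂ
  | 0 => !![1/2, (1 - I)/4; (1 + I)/4, 0]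
  | 1 => !![1/2, -(1 - I)/4; -(1 + I)/4, 0]
  | 2 => !![0, (1 + I)/4; (1 - I)/4, 1/2]
  | 3 => !![0, -(1 + I)/4; -(1 - I)/4, 1/2]

lemma sq2 : ((Real.sqrt 2 : ℂ))⁻¹ * ((Real.sqrt 2 : ℂ))⁻¹ = 1/2 := by
  rw [← mul_inv, ← Complex.ofReal_mul, Real.mul_self_sqrt (by norm_num : (0:ℝ) ≤ 2)]
  norm_num

lemma e00 : proj ketPlus = Lmat 0 + Lmat 2 := by
  ext a b
  fin_cases a <;> fin_cases b <;>
    simp [proj, ketPlus, Lmat, vecMulVec_apply, smul_eq_mul, mul_comm, mul_assoc,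
      mul_left_comm, sq2] <;> norm_num [sq2] <;> ring

lemma e01 : proj ketMinus = Lmat 1 + Lmat 3 := by
  ext a b
  fin_cases a <;> fin_cases b <;>
    simp [proj, ketMinus, Lmat, vecMulVec_apply, smul_eq_mul, mul_comm, mul_assoc,
      mul_left_comm, sq2] <;> norm_num [sq2] <;> ring

lemma e10 : proj ketPlusI = Lmat 0 + Lmat 3 := by
  ext a b
  fin_cases a <;> fin_cases b <;>
    simp [proj, ketPlusI, Lmat, vecMulVec_apply, smul_eq_mul, mul_comm, mul_assoc,
      mul_left_comm, sq2] <;> norm_num [sq2, Complex.ext_iff] <;> ring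

lemma e11 : proj ketMinusI = Lmat 1 + Lmat 2 := by
  ext a b
  fin_cases a <;> fin_cases b <;>
    simp [proj, ketMinusI, Lmat, vecMulVec_apply, smul_eq_mul, mul_comm, mul_assoc,
      mul_left_comm, sq2] <;> norm_num [sq2, Complex.ext_iff] <;> ring

lemma e20 : proj ket0 = Lmat 0 + Lmat 1 := by
  ext a b
  fin_cases a <;> fin_cases b <;>
    simp [proj, ket0, Lmat, vecMulVec_apply] <;> norm_num <;> ring

lemma e21 : proj ket1 = Lmat 2 + Lmat 3 := by
  ext a b
  fin_cases a <;> fin_cases b <;>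
    simp [proj, ket1, Lmat, vecMulVec_apply] <;> norm_num <;> ring

lemma kraus_sum : ∑ k : Fin 4, (Lmat k)ᴴ * Lmat k = 1 := by
  rw [Fin.sum_univ_four]
  ext a b
  fin_cases a <;> fin_cases b <;>
    simp [Lmat, Matrix.mul_apply, Matrix.conjTranspose_apply, Fin.sum_univ_succ,
      Matrix.one_apply, map_div₀, map_sub, map_add, Complex.conj_I, map_neg, map_ofNat,
      Complex.ext_iff] <;> norm_num

theorem exists_kraus_decomposition :
    ∃ (L : Fin 4 → Matrix (Fin 2) (Fin 2) ℂ) (X : Fin 3 → Fin 2 → Finset (Fin 4)),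
      (∑ k : Fin 4, (L k)ᴴ * L k = 1) ∧
      (∀ J i, (X J i).card = 2) ∧
      (∀ J i, M J i = ∑ k ∈ X J i, L k) ∧
      Function.Injective (fun p : Fin 3 × Fin 2 => X p.1 p.2) ∧
      (∀ J, Disjoint (X J 0) (X J 1)) ∧
      X 0 0 = {0, 2} ∧ X 0 1 = {1, 3} ∧ X 1 0 = {0, 3} ∧
      X 1 1 = {1, 2} ∧ X 2 0 = {0, 1} ∧ X 2 1 = {2, 3} := by
  refine ⟨Lmat, fun J i =>
    match J, i with
    | 0, 0 => {0, 2} | 0, 1 => {1, 3} | 1, 0 => {0, 3}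
    | 1, 1 => {1, 2} | 2, 0 => {0, 1} | 2, 1 => {2, 3},
    kraus_sum, by decide, ?_, by decide, by decide, rfl, rfl, rfl, rfl, rfl, rfl⟩
  intro J i
  fin_cases J <;> fin_cases i <;>
    simp only [M, Finset.sum_pair (by decide : (0:Fin 4) ≠ 2),
      Finset.sum_pair (by decide : (1:Fin 4) ≠ 3), Finset.sum_pair (by decide : (0:Fin 4) ≠ 3),
      Finset.sum_pair (by decide : (1:Fin 4) ≠ 2), Finset.sum_pair (by decide : (0:Fin 4) ≠ 1),
      Finset.sum_pair (by decide : (2:Fin 4) ≠ 3)]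
  · exact e00
  · exact e01
  · exact e10
  · exact e11
  · exact e20
  · exact e21
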